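/- arXiv:cs/0702054 — 4 statements merged into one kernel-verified Lean document; each statement's English description precedes it below -/
import Mathlib

section
/- If a finite simple graph G has the property that every vertex has at least one neighbor (no isolated vertices), then removing any edge (u,v) together with u, v, and all vertices that would become isolated after deleting u and v, yields a graph with no isolated vertices; consequently the greedy star-removal procedure partitions V into stars. -/
/-- A star in a graph: a vertex set of size at least 2 with a center adjacent to
all other vertices of the set. -/
def IsStar {V : Type*} [DecidableEq V] (G : SimpleGraph V) (A : Finset V) : Prop :=
  2 ≤ A.card ∧ ∃ v0 ∈ A, ∀ v ∈ A, v ≠ v0 → G.Adj v0 v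

lemma aux_partition {V : Type*} [DecidableEq V] (G : SimpleGraph V) :
    ∀ n (S : Finset V), S.card ≤ n → (∀ w ∈ S, ∃ y ∈ S, G.Adj w y) →
    ∃ P : Finset (Finset V), (∀ A ∈ P, IsStar G A ∧ A ⊆ S) ∧
      ∀ x ∈ S, ∃! A : Finset V, A ∈ P ∧ x ∈ A := by
  classical
  intro n
  induction n with
  | zero =>
    intro S hcard _
    have hS : S = ∅ := Finset.card_eq_zero.mp (Nat.le_zero.mp hcard)
    subst hS
    exact ⟨∅, by simp, by simp⟩
  | succ n ih =>
    intro S hcard hS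
    rcases S.eq_empty_or_nonempty with rfl | hne
    · exact ⟨∅, by simp, by simp⟩
    obtain ⟨u, v, hu, hv, huv, hcenter⟩ : ∃ u v, u ∈ S ∧ v ∈ S ∧ G.Adj u v ∧
        ∀ x ∈ S, x ≠ u → x ≠ v → (∀ y ∈ S, G.Adj x y → y = u ∨ y = v) → G.Adj v x := by
      by_cases h1 : ∃ u ∈ S, ∃ v, (v ∈ S ∧ G.Adj u v) ∧ ∀ y ∈ S, G.Adj u y → y = v
      · obtain ⟨u, hu, v, ⟨hv, huv⟩, huniq⟩ := h1
        refine ⟨u, v, hu, hv, huv, ?_⟩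
        intro x hx hxu hxv hfil
        obtain ⟨y, hy, hxy⟩ := hS x hx
        rcases hfil y hy hxy with rfl | rfl
        · exact absurd (huniq x hx hxy.symm) hxv
        · exact hxy.symm
      · push_neg at h1
        obtain ⟨w, hw⟩ := hne
        obtain ⟨v', hv', hwv'⟩ := hS w hw
        refine ⟨w, v', hw, hv', hwv', ?_⟩
        intro x hx hxu hxv hfil
        obtain ⟨y, hy, hxy⟩ := hS x hx
        rcases hfil y hy hxy with rfl | rfl
        · obtain ⟨z, hz, hxz, hzy⟩ := h1 x hx y ⟨hy, hxy⟩
          rcases hfil z hz hxz with rfl | rfl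
          · exact absurd rfl hzy
          · exact hxz.symm
        · exact hxy.symm
    set A : Finset V :=
      insert u (insert v (S.filter fun x => ∀ y ∈ S, G.Adj x y → y = u ∨ y = v)) with hA
    have hmemA : ∀ x, x ∈ A ↔ x = u ∨ x = v ∨
        (x ∈ S ∧ ∀ y ∈ S, G.Adj x y → y = u ∨ y = v) := by
      intro x; simp [hA, Finset.mem_filter, and_assoc]
    have hAS : A ⊆ S := by
      intro x hx
      rcases (hmemA x).mp hx with rfl | rfl | ⟨h, _⟩ <;> assumption
    have hne' : u ≠ v := G.ne_of_adj huv
    have hstar : IsStar G A := by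
      constructor
      · have hsub : ({u, v} : Finset V) ⊆ A := by
          intro x hx
          rcases Finset.mem_insert.mp hx with rfl | hx
          · exact (hmemA x).mpr (Or.inl rfl)
          · exact (hmemA x).mpr (Or.inr (Or.inl (Finset.mem_singleton.mp hx)))
        calc 2 = ({u, v} : Finset V).card := (Finset.card_pair hne').symm
          _ ≤ A.card := Finset.card_le_card hsub
      · refine ⟨v, (hmemA v).mpr (Or.inr (Or.inl rfl)), ?_⟩
        intro x hx hxv
        rcases (hmemA x).mp hx with rfl | rfl | ⟨hxS, hfil⟩
        · exact huv.symm
        · exact absurd rfl hxv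
        · by_cases hxu : x = u
          · subst hxu; exact huv.symm
          · exact hcenter x hxS hxu hxv hfil
    have hS' : ∀ w ∈ S \ A, ∃ y ∈ S \ A, G.Adj w y := by
      intro w hw
      rw [Finset.mem_sdiff] at hw
      obtain ⟨hwS, hwA⟩ := hw
      have h := (hmemA w).not.mp hwA
      have hwu : w ≠ u := fun e => h (Or.inl e)
      have hwv : w ≠ v := fun e => h (Or.inr (Or.inl e))
      have h3 : ¬ ∀ y ∈ S, G.Adj w y → y = u ∨ y = v :=
        fun hf => h (Or.inr (Or.inr ⟨hwS, hf⟩))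
      push_neg at h3
      obtain ⟨y, hy, hwy, hyuv⟩ := h3
      refine ⟨y, ?_, hwy⟩
      rw [Finset.mem_sdiff]
      refine ⟨hy, fun hyA => ?_⟩
      rcases (hmemA y).mp hyA with rfl | rfl | ⟨_, hfil⟩
      · exact hyuv.1 rfl
      · exact hyuv.2 rfl
      · rcases hfil w hwS hwy.symm with rfl | rfl
        · exact hwu rfl
        · exact hwv rfl
    have huA : u ∈ A := (hmemA u).mpr (Or.inl rfl)
    have hcard' : (S \ A).card ≤ n := by
      have : (S \ A) ⊂ S := by
        refine Finset.ssubset_iff_of_subset (Finset.sdiff_subset) |>.mpr ?_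
        exact ⟨u, hu, by simp [huA]⟩
      have := Finset.card_lt_card this
      omega
    obtain ⟨P', hP'star, hP'uniq⟩ := ih (S \ A) hcard' hS'
    refine ⟨insert A P', ?_, ?_⟩
    · intro B hB
      rcases Finset.mem_insert.mp hB with rfl | hB
      · exact ⟨hstar, hAS⟩
      · exact ⟨(hP'star B hB).1, (hP'star B hB).2.trans (Finset.sdiff_subset)⟩
    · intro x hx
      by_cases hxA : x ∈ A
      · refine ⟨A, ⟨Finset.mem_insert_self _ _, hxA⟩, ?_⟩
        rintro B ⟨hB, hxB⟩
        rcases Finset.mem_insert.mp hB with rfl | hB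
        · rfl
        · have := (hP'star B hB).2 hxB
          rw [Finset.mem_sdiff] at this
          exact absurd hxA this.2
      · have hx' : x ∈ S \ A := Finset.mem_sdiff.mpr ⟨hx, hxA⟩
        obtain ⟨B, ⟨hB, hxB⟩, hBuniq⟩ := hP'uniq x hx'
        refine ⟨B, ⟨Finset.mem_insert_of_mem hB, hxB⟩, ?_⟩
        rintro C ⟨hC, hxC⟩
        rcases Finset.mem_insert.mp hC with rfl | hC
        · exact absurd hxC hxA
        · exact hBuniq C ⟨hC, hxC⟩

/-- If a finite simple graph has no isolated vertices, then removing any edge `(u,v)`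
together with `u`, `v` and all vertices that would become isolated after deleting
`u` and `v` yields a graph with no isolated vertices; consequently the greedy
star-removal procedure partitions the vertex set into stars. -/
theorem stmt4 {V : Type*} [Fintype V] [DecidableEq V] (G : SimpleGraph V)
    (hmin : ∀ v : V, ∃ w : V, G.Adj v w) (u v : V) (huv : G.Adj u v) :
    (∀ w : V,
        w ∉ ({u, v} ∪ {x : V | ∀ y : V, G.Adj x y → y = u ∨ y = v} : Set V) →
        ∃ x : V,
          x ∉ ({u, v} ∪ {x : V | ∀ y : V, G.Adj x y → y = u ∨ y = v} : Set V) ∧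
          G.Adj w x) ∧
    ∃ P : Finset (Finset V), (∀ A ∈ P, IsStar G A) ∧
      ∀ x : V, ∃! A : Finset V, A ∈ P ∧ x ∈ A := by
  constructor
  · intro w hw
    simp only [Set.mem_union, Set.mem_insert_iff, Set.mem_singleton_iff,
      Set.mem_setOf_eq] at hw
    push_neg at hw
    obtain ⟨⟨hwu, hwv⟩, y, hwy, hyu, hyv⟩ := hw
    refine ⟨y, ?_, hwy⟩
    simp only [Set.mem_union, Set.mem_insert_iff, Set.mem_singleton_iff,
      Set.mem_setOf_eq]
    push_neg
    exact ⟨⟨hyu, hyv⟩, w, hwy.symm, hwu, hwv⟩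
  · obtain ⟨P, hP, huniq⟩ := aux_partition G (Finset.univ.card) Finset.univ le_rfl
      (fun w _ => by obtain ⟨y, hy⟩ := hmin w; exact ⟨y, Finset.mem_univ y, hy⟩)
    exact ⟨P, fun A hA => (hP A hA).1, fun x => huniq x (Finset.mem_univ x)⟩
end

section
/- On the cycle graph, in the Voronoi game with disjoint facilities, when a player performs a best response move to an unoccupied vertex, the multiset of gaps between consecutive occupied facilities strictly decreases in the dominance order; therefore the best response dynamic starting from a profile with distinct facilities converges to a Nash equilibrium in finitely many steps. -/
/-!
A best-response move replaces the gaps `{dᵢ, dᵢ₊₁, dⱼ}` by `{dᵢ + dᵢ₊₁, d', d''}`, three gaps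
that are all strictly smaller than `dⱼ` because the move is profitable. Replacing a submultiset
by one of the same size with a strictly smaller maximum is a strict decrease in the dominance
order, and also a step of the Dershowitz–Manna multiset order, which is well-founded on `ℕ`.
-/

/-- Fueled version of the dominance order on multisets of naturals. -/
def DomAux : ℕ → Multiset ℕ → Multiset ℕ → Prop
  | 0, _, _ => False
  | n + 1, A, B =>
      A.card < B.card ∨
        (A.card = B.card ∧ A ≠ 0 ∧
          (B.sup < A.sup ∨
            (A.sup = B.sup ∧ DomAux n (A.erase A.sup) (B.erase B.sup))))

/-- The dominance order: `Dom A B` means `A ≻ B`, i.e. `|A| < |B|`, or the sizes agree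
and `max A > max B`, or the sizes and maxima agree and the multisets obtained by
removing one copy of the maxima satisfy the relation recursively. -/
def Dom (A B : Multiset ℕ) : Prop := DomAux (A.card + 1) A B

/-- A best-response move in the Voronoi game with disjoint facilities on the cycle:
the moving player (with adjacent gaps `di`, `di1`) relocates to an unoccupied vertex
splitting some gap `dj` into `d' + d''`, strictly increasing his payoff
(`(di + di1)/2 < dj/2`). -/
def CycleBestResponseStep (D' D : Multiset ℕ) : Prop :=
  ∃ di di1 dj d' d'' : ℕ,
    ({di, di1, dj} : Multiset ℕ) ≤ D ∧ 1 ≤ d' ∧ 1 ≤ d'' ∧ d' + d'' = dj ∧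
    di + di1 < dj ∧ D' = D - {di, di1, dj} + {di + di1, d', d''}

lemma Multiset.sup_mem_of_ne_zero {α : Type*} [LinearOrder α] [OrderBot α] {s : Multiset α}
    (hs : s ≠ 0) : s.sup ∈ s := by
  induction s using Multiset.induction_on with
  | empty => exact absurd rfl hs
  | cons a t ih =>
    rw [Multiset.sup_cons]
    rcases eq_or_ne t 0 with rfl | ht
    · simp
    rcases le_total a t.sup with hle | hle
    · rw [sup_eq_right.mpr hle]
      exact Multiset.mem_cons_of_mem (ih ht)
    · rw [sup_eq_left.mpr hle]
      exact Multiset.mem_cons_self _ _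

lemma Multiset.isDershowitzMannaLT_add_add_of_sup_lt {α : Type*} [LinearOrder α] [OrderBot α]
    (C : Multiset α) {X Y : Multiset α} (hsup : Y.sup < X.sup) :
    (C + Y).IsDershowitzMannaLT (C + X) := by
  have hX : X ≠ 0 := by
    rintro rfl
    exact not_lt_bot (Multiset.sup_zero (α := α) ▸ hsup)
  refine ⟨C, Y, X, hX, rfl, rfl, fun y hy => ⟨X.sup, Multiset.sup_mem_of_ne_zero hX, ?_⟩⟩
  exact (Multiset.le_sup hy).trans_lt hsup

/-- When the maximum is the common `C.sup`, erasing it recurses with `C.erase C.sup`, so the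
fuel only has to exceed `C.card`. -/
lemma domAux_add_add_of_sup_lt {fuel : ℕ} {C X Y : Multiset ℕ} (hC : C.card < fuel)
    (hcard : X.card = Y.card) (hsup : Y.sup < X.sup) : DomAux fuel (C + X) (C + Y) := by
  induction fuel generalizing C with
  | zero => omega
  | succ m ih =>
    have hX : X ≠ 0 := by
      rintro rfl
      simp at hsup
    refine Or.inr ⟨by simp [hcard], by simp [hX], ?_⟩
    simp only [Multiset.sup_add]
    rcases lt_or_ge C.sup X.sup with hCX | hXC
    · exact Or.inl (by simp [hsup, hCX])
    · have hCne : C ≠ 0 := by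
        rintro rfl
        simp at hXC
        omega
      have hmem := Multiset.sup_mem_of_ne_zero hCne
      rw [sup_eq_left.mpr hXC, sup_eq_left.mpr (hsup.le.trans hXC),
        Multiset.erase_add_left_pos X hmem, Multiset.erase_add_left_pos Y hmem]
      refine Or.inr ⟨rfl, ih ?_⟩
      rw [Multiset.card_erase_of_mem hmem, Nat.pred_eq_sub_one]
      have := Multiset.card_pos.mpr hCne
      omega

lemma dom_add_add_of_sup_lt {C X Y : Multiset ℕ} (hcard : X.card = Y.card)
    (hsup : Y.sup < X.sup) : Dom (C + X) (C + Y) :=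
  domAux_add_add_of_sup_lt (Nat.lt_succ_of_le (by simp)) hcard hsup

lemma CycleBestResponseStep.exists_add_add {D' D : Multiset ℕ}
    (h : CycleBestResponseStep D' D) :
    ∃ C X Y : Multiset ℕ, D = C + X ∧ D' = C + Y ∧ X.card = Y.card ∧ Y.sup < X.sup := by
  obtain ⟨di, di1, dj, d', d'', hle, hd', hd'', hsplit, hgain, rfl⟩ := h
  refine ⟨D - {di, di1, dj}, {di, di1, dj}, {di + di1, d', d''},
    (tsub_add_cancel_of_le hle).symm, rfl, rfl, ?_⟩
  have hdj : dj ≤ ({di, di1, dj} : Multiset ℕ).sup := Multiset.le_sup (by simp)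
  refine lt_of_lt_of_le ?_ hdj
  simp only [Multiset.insert_eq_cons, Multiset.sup_cons, Multiset.sup_singleton, sup_lt_iff]
  omega

/-- On the cycle, every best-response move to an unoccupied vertex strictly decreases
the multiset of gaps between consecutive occupied facilities in the dominance order;
consequently the best-response dynamic (on profiles with distinct facilities on the
cycle `C_n`, whose gaps are positive and sum to `n`) terminates after finitely many
steps, i.e. converges to a Nash equilibrium. -/
theorem stmt6 (n : ℕ) :
    (∀ D D' : Multiset ℕ, (∀ x ∈ D, 0 < x) → CycleBestResponseStep D' D → Dom D D') ∧
    Set.WellFoundedOn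
      {D : Multiset ℕ | D.sum = n ∧ ∀ x ∈ D, 0 < x}
      CycleBestResponseStep := by
  refine ⟨fun D D' _ h => ?_, ?_⟩
  · obtain ⟨C, X, Y, rfl, rfl, hcard, hsup⟩ := h.exists_add_add
    exact dom_add_add_of_sup_lt hcard hsup
  · refine Subrelation.wf (fun {D' D} h => ?_) Multiset.wellFounded_isDershowitzMannaLT
      |>.wellFoundedOn
    obtain ⟨C, X, Y, rfl, rfl, -, hsup⟩ := h.exists_add_add
    exact Multiset.isDershowitzMannaLT_add_add_of_sup_lt C hsup
end

section
/- In the Voronoi game with disjoint facilities on a cycle, if player i with payoff (d_i + d_{i+1})/2 moves to split a gap d_j into d' + d'' (d', d'' >= 1) and this move strictly increases the player's payoff, then the resulting multiset of gaps is strictly dominated by the original, i.e., replacing {d_i, d_{i+1}, d_j} by {d_i + d_{i+1}, d', d''} strictly decreases the multiset in the dominance order. -/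
lemma sup_mem_of_ne_zero {s : Multiset ℕ} (h : s ≠ 0) : s.sup ∈ s := by
  induction s using Multiset.induction with
  | empty => exact absurd rfl h
  | cons a t ih =>
    rw [Multiset.sup_cons]
    by_cases ht : t = 0
    · subst ht; simp
    · rcases le_total t.sup a with hle | hle
      · rw [sup_eq_left.mpr hle]; exact Multiset.mem_cons_self a t
      · rw [sup_eq_right.mpr hle]
        exact Multiset.mem_cons_of_mem (ih ht)

lemma key (X Y : Multiset ℕ) (hc : X.card = Y.card) (hx : X ≠ 0)
    (hsup : Y.sup < X.sup) : ∀ E : Multiset ℕ, Dom (E + X) (E + Y) := by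
  intro E
  induction E using Multiset.strongInductionOn with
  | ih E ih =>
    have hcard : (E + X).card = (E + Y).card := by simp [hc]
    have hne : E + X ≠ 0 := by
      intro h
      apply hx
      have hc0 := congrArg Multiset.card h
      simp only [Multiset.card_add, Multiset.card_zero] at hc0
      exact Multiset.card_eq_zero.mp (by omega)
    have hsupA : (E + X).sup = E.sup ⊔ X.sup := Multiset.sup_add E X
    have hsupB : (E + Y).sup = E.sup ⊔ Y.sup := Multiset.sup_add E Y
    rcases lt_or_ge E.sup X.sup with hEX | hEX
    · -- new max smaller
      have hlt : (E + Y).sup < (E + X).sup := by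
        rw [hsupA, hsupB, sup_eq_right.mpr hEX.le]
        exact sup_lt_iff.mpr ⟨hEX, hsup⟩
      exact Or.inr ⟨hcard, hne, Or.inl hlt⟩
    · -- maxima agree, recurse
      have hEne : E ≠ 0 := by
        intro h; subst h
        simp only [Multiset.sup_zero] at hEX
        exact absurd (lt_of_lt_of_le hsup hEX) (by simp)
      have hmem : E.sup ∈ E := sup_mem_of_ne_zero hEne
      have hsA : (E + X).sup = E.sup := by rw [hsupA, sup_eq_left.mpr hEX]
      have hsB : (E + Y).sup = E.sup := by
        rw [hsupB, sup_eq_left.mpr (le_trans hsup.le hEX)]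
      have heA : (E + X).erase (E + X).sup = E.erase E.sup + X := by
        rw [hsA, Multiset.erase_add_left_pos X hmem]
      have heB : (E + Y).erase (E + Y).sup = E.erase E.sup + Y := by
        rw [hsB, Multiset.erase_add_left_pos Y hmem]
      have hrec := ih (E.erase E.sup) (Multiset.erase_lt.mpr hmem)
      have hfuel : (E.erase E.sup + X).card + 1 = (E + X).card := by
        rw [Multiset.card_add, Multiset.card_add,
          Multiset.card_erase_of_mem hmem]
        have h1 : 1 ≤ E.card := Multiset.card_pos.mpr hEne
        rw [Nat.pred_eq_sub_one]
        omega
      refine Or.inr ⟨hcard, hne, Or.inr ⟨by rw [hsA, hsB], ?_⟩⟩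
      rw [heA, heB, hfuel.symm]
      exact hrec

/-- In the Voronoi game with disjoint facilities on a cycle, if a player whose two
adjacent gaps are `di` and `di1` makes a strictly payoff-improving move splitting a
gap `dj` into `d' + d''` (with `d', d'' ≥ 1`), then the new multiset of gaps,
obtained by replacing `{di, di1, dj}` with `{di + di1, d', d''}`, is strictly
dominated by the original one. -/
theorem stmt7 (D : Multiset ℕ) (hpos : ∀ x ∈ D, 0 < x)
    (di di1 dj d' d'' : ℕ)
    (hsub : ({di, di1, dj} : Multiset ℕ) ≤ D)
    (hd' : 1 ≤ d') (hd'' : 1 ≤ d'') (hsplit : d' + d'' = dj)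
    (himprove : di + di1 < dj) :
    Dom D (D - {di, di1, dj} + {di + di1, d', d''}) := by
  have hD : D = D - {di, di1, dj} + {di, di1, dj} := (tsub_add_cancel_of_le hsub).symm
  nth_rewrite 1 [hD]
  apply key
  · simp
  · simp
  · have h1 : d' < dj := by omega
    have h2 : d'' < dj := by omega
    have hXsup : dj ≤ ({di, di1, dj} : Multiset ℕ).sup := by
      simp [Multiset.sup_cons]
    have hYsup : ({di + di1, d', d''} : Multiset ℕ).sup < dj := by
      simp only [Multiset.insert_eq_cons, Multiset.sup_cons, Multiset.sup_singleton]
      omega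
    exact lt_of_lt_of_le hYsup hXsup
end

section
/- In any Nash equilibrium of the Voronoi game on a connected graph with n vertices and k players, the radius of every player's Voronoi cell is at most n/k + 1. -/
open Finset
open scoped Classical

noncomputable def cell {V : Type*} [Fintype V] (G : SimpleGraph V) {k : ℕ}
    (f : Fin k → V) (i : Fin k) (v : V) : ℚ :=
  if G.edist v (f i) = ⨅ j, G.edist v (f j) then
    (1 : ℚ) / (Finset.univ.filter fun j => G.edist v (f j) = ⨅ j', G.edist v (f j')).card
  else 0

noncomputable def payoff {V : Type*} [Fintype V] (G : SimpleGraph V) {k : ℕ}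
    (f : Fin k → V) (i : Fin k) : ℚ :=
  ∑ v, cell G f i v

def IsNashEq {V : Type*} [Fintype V] (G : SimpleGraph V) {k : ℕ} (f : Fin k → V) : Prop :=
  ∀ (i : Fin k) (x : V), payoff G (Function.update f i x) i ≤ payoff G f i

/-- The radius of the Voronoi cell of player `i`: the largest distance from `f i` to a
vertex fractionally assigned to player `i`. -/
noncomputable def cellRadius {V : Type*} [Fintype V] (G : SimpleGraph V) {k : ℕ}
    (f : Fin k → V) (i : Fin k) : ℕ :=
  (Finset.univ.filter fun v => 0 < cell G f i v).sup fun v => (G.edist v (f i)).toNat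

/-- The Delaunay triangulation of a strategy profile: the graph on the players where
`i` and `j` are adjacent if their Voronoi cells share a vertex, or contain two
adjacent vertices respectively. -/
noncomputable def delaunay {V : Type*} [Fintype V] (G : SimpleGraph V) {k : ℕ}
    (f : Fin k → V) : SimpleGraph (Fin k) where
  Adj i j := i ≠ j ∧
    ((∃ v, 0 < cell G f i v ∧ 0 < cell G f j v) ∨
      ∃ v v', G.Adj v v' ∧ 0 < cell G f i v ∧ 0 < cell G f j v')
  symm := by
    refine ⟨?_⟩
    rintro i j ⟨hne, ⟨v, h1, h2⟩ | ⟨v, v', hvv, h1, h2⟩⟩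
    · exact ⟨hne.symm, Or.inl ⟨v, h2, h1⟩⟩
    · exact ⟨hne.symm, Or.inr ⟨v', v, hvv.symm, h2, h1⟩⟩
  loopless := by refine ⟨?_⟩; rintro i ⟨h, -⟩; exact h rfl

/-!
Some player `j` earns at most `n / k`. Let `v` be a vertex of the cell of player `i`, at
distance `r` from `f i`; then every facility is at distance at least `r` from `v`. If `j`
moves to the vertex at distance `r - 1` from `v` on a shortest path from `v` to `f i`, it
becomes the unique closest facility of the `r` vertices of that path at distance `< r` from
`v`, so it earns at least `r`. At an equilibrium this deviation does not pay, so
`r ≤ n / k`.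
-/

namespace SimpleGraph.Walk

variable {V : Type*} {G : SimpleGraph V} {u v : V}

lemma edist_getVert_le (p : G.Walk u v) {s t : ℕ} (hst : s ≤ t) :
    G.edist (p.getVert s) (p.getVert t) ≤ (t - s : ℕ) := by
  calc G.edist (p.getVert s) (p.getVert t)
      = G.edist (p.getVert s) ((p.drop s).getVert (t - s)) := by
        rw [drop_getVert, Nat.add_sub_cancel' hst]
    _ ≤ ((p.drop s).take (t - s)).length := edist_le _
    _ ≤ (t - s : ℕ) := by
        rw [take_length]
        exact_mod_cast min_le_left _ _

lemma edist_getVert_of_length_eq_edist (p : G.Walk u v) (hp : p.length = G.edist u v)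
    {t : ℕ} (ht : t ≤ p.length) : G.edist u (p.getVert t) = t := by
  have hle : G.edist u (p.getVert t) ≤ t := by
    simpa using p.edist_getVert_le (Nat.zero_le t)
  obtain ⟨d, hd⟩ := ENat.ne_top_iff_exists.mp (ne_top_of_le_ne_top (ENat.natCast_ne_top t) hle)
  have hrest : G.edist (p.getVert t) v ≤ (p.length - t : ℕ) := by
    simpa [p.getVert_of_length_le le_rfl] using p.edist_getVert_le ht
  have htri : (p.length : ℕ∞) ≤ d + (p.length - t : ℕ) := by
    rw [hp, hd]
    exact SimpleGraph.edist_triangle.trans (by gcongr)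
  rw [← hd] at hle ⊢
  norm_cast at hle htri ⊢
  omega

end SimpleGraph.Walk

section VoronoiGame

variable {V : Type*} [Fintype V] (G : SimpleGraph V) {k : ℕ} (f : Fin k → V)

lemma cell_nonneg (i : Fin k) (v : V) : 0 ≤ cell G f i v := by
  unfold cell
  split_ifs <;> positivity

lemma payoff_nonneg (i : Fin k) : 0 ≤ payoff G f i :=
  Finset.sum_nonneg fun v _ => cell_nonneg G f i v

variable {G f}

lemma edist_eq_iInf_of_cell_pos {i : Fin k} {v : V} (h : 0 < cell G f i v) :
    G.edist v (f i) = ⨅ j, G.edist v (f j) := by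
  by_contra hne
  simp [cell, hne] at h

lemma cell_eq_one_of_forall_edist_lt {j : Fin k} {v : V}
    (h : ∀ m ≠ j, G.edist v (f j) < G.edist v (f m)) : cell G f j v = 1 := by
  have hinf : (⨅ m, G.edist v (f m)) = G.edist v (f j) := by
    refine le_antisymm (iInf_le _ j) (le_iInf fun m => ?_)
    rcases eq_or_ne m j with rfl | hm
    exacts [le_rfl, (h m hm).le]
  have hclosest :
      (Finset.univ.filter fun m => G.edist v (f m) = ⨅ m', G.edist v (f m')) = {j} := by
    ext m
    rcases eq_or_ne m j with rfl | hm
    · simp [hinf]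
    · simpa [hinf, hm] using (h m hm).ne'
  rw [cell, if_pos hinf.symm, hclosest]
  simp

lemma card_le_payoff_of_cell_eq_one {j : Fin k} {s : Finset V}
    (h : ∀ v ∈ s, cell G f j v = 1) : (s.card : ℚ) ≤ payoff G f j := by
  calc (s.card : ℚ) = ∑ v ∈ s, cell G f j v := by simp [Finset.sum_congr rfl h]
    _ ≤ payoff G f j :=
      Finset.sum_le_sum_of_subset_of_nonneg (Finset.subset_univ s)
        fun v _ _ => cell_nonneg G f j v

lemma le_payoff_update_of_walk (j : Fin k) {v u : V} (p : G.Walk v u)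
    (hp : p.length = G.edist v u) (hfar : ∀ m, (p.length : ℕ∞) ≤ G.edist v (f m)) :
    (p.length : ℚ) ≤ payoff G (Function.update f j (p.getVert (p.length - 1))) j := by
  set w := p.getVert (p.length - 1)
  have hdist : ∀ t ≤ p.length, G.edist v (p.getVert t) = t :=
    fun t ht => p.edist_getVert_of_length_eq_edist hp ht
  have hcaptured : ∀ t < p.length, cell G (Function.update f j w) j (p.getVert t) = 1 := by
    intro t ht
    refine cell_eq_one_of_forall_edist_lt fun m hmj => ?_
    rw [Function.update_self, Function.update_of_ne hmj]
    have hw : G.edist (p.getVert t) w ≤ (p.length - 1 - t : ℕ) := p.edist_getVert_le (by omega)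
    have hm : (p.length : ℕ∞) ≤ t + G.edist (p.getVert t) (f m) := by
      rw [← hdist t ht.le]
      exact (hfar m).trans SimpleGraph.edist_triangle
    refine hw.trans_lt ?_
    generalize G.edist (p.getVert t) (f m) = e at hm ⊢
    cases e using ENat.recTopCoe with
    | top => exact ENat.natCast_lt_top _
    | coe d =>
      norm_cast at hm ⊢
      omega
  have hinj : Set.InjOn p.getVert (Finset.range p.length) := fun s hs t ht hst => by
    simp only [Finset.coe_range, Set.mem_Iio] at hs ht
    exact_mod_cast (hdist s hs.le).symm.trans ((congrArg _ hst).trans (hdist t ht.le))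
  calc (p.length : ℚ) = ((Finset.range p.length).image p.getVert).card := by
        rw [Finset.card_image_of_injOn hinj, Finset.card_range]
    _ ≤ payoff G (Function.update f j w) j :=
        card_le_payoff_of_cell_eq_one (by simpa using hcaptured)

lemma exists_le_payoff_update_of_cell_pos {i : Fin k} {v : V} (hv : 0 < cell G f i v)
    (j : Fin k) : ∃ x, ((G.edist v (f i)).toNat : ℚ) ≤ payoff G (Function.update f j x) j := by
  by_cases htop : G.edist v (f i) = ⊤
  -- a vertex unreachable from `f i` counts as radius `⊤.toNat = 0`
  · exact ⟨f j, by simpa [htop] using payoff_nonneg G _ j⟩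
  obtain ⟨p, hp⟩ := SimpleGraph.exists_walk_of_edist_ne_top htop
  have hfar : ∀ m, (p.length : ℕ∞) ≤ G.edist v (f m) := by
    rw [hp, edist_eq_iInf_of_cell_pos hv]
    exact fun m => iInf_le _ m
  rw [← hp, ENat.toNat_natCast]
  exact ⟨_, le_payoff_update_of_walk j p hp hfar⟩

lemma IsNashEq.cellRadius_le_payoff (hf : IsNashEq G f) (i j : Fin k) :
    (cellRadius G f i : ℚ) ≤ payoff G f j := by
  have hfloor : cellRadius G f i ≤ ⌊payoff G f j⌋₊ := Finset.sup_le fun v hv => by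
    obtain ⟨x, hx⟩ := exists_le_payoff_update_of_cell_pos (Finset.mem_filter.mp hv).2 j
    exact Nat.le_floor (hx.trans (hf j x))
  exact (Nat.cast_le.mpr hfloor).trans (Nat.floor_le (payoff_nonneg G f j))

variable (G f) [Nonempty (Fin k)]

lemma sum_cell_eq_one (v : V) : ∑ i, cell G f i v = 1 := by
  set S := Finset.univ.filter fun j => G.edist v (f j) = ⨅ j', G.edist v (f j')
  obtain ⟨m, hm⟩ := exists_eq_ciInf_of_finite (f := fun j => G.edist v (f j))
  have hS : (S.card : ℚ) ≠ 0 := by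
    exact_mod_cast (Finset.card_pos.mpr ⟨m, by simp [S, hm]⟩).ne'
  calc ∑ i, cell G f i v = ∑ i ∈ S, (1 : ℚ) / S.card := by
        rw [Finset.sum_filter]
        rfl
    _ = 1 := by
        rw [Finset.sum_const, nsmul_eq_mul]
        field_simp

lemma sum_payoff_eq_card : ∑ i, payoff G f i = Fintype.card V := by
  simp only [payoff]
  rw [Finset.sum_comm]
  simp [sum_cell_eq_one]

lemma exists_payoff_le_card_div : ∃ j, payoff G f j ≤ Fintype.card V / k := by
  have hk : (k : ℚ) ≠ 0 := by exact_mod_cast (Fin.pos_iff_nonempty.mpr ‹_›).ne'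
  obtain ⟨j, -, hj⟩ := Finset.exists_le_of_sum_le (f := payoff G f)
    (g := fun _ => (Fintype.card V : ℚ) / k) Finset.univ_nonempty
    (by simp [sum_payoff_eq_card, mul_div_cancel₀ _ hk])
  exact ⟨j, hj⟩

end VoronoiGame

theorem stmt14_general {V : Type*} [Fintype V] (G : SimpleGraph V) (k : ℕ)
    (f : Fin k → V) (hf : IsNashEq G f) (i : Fin k) :
    (cellRadius G f i : ℚ) ≤ (Fintype.card V : ℚ) / k + 1 := by
  have : Nonempty (Fin k) := ⟨i⟩
  obtain ⟨j, hj⟩ := exists_payoff_le_card_div G f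
  linarith [hf.cellRadius_le_payoff i j]

/-- In any Nash equilibrium of the Voronoi game on a connected graph with `n` vertices
and `k` players, the radius of every player's Voronoi cell is at most `n/k + 1`. -/
theorem stmt14 {V : Type*} [Fintype V] [DecidableEq V] (G : SimpleGraph V)
    (hG : G.Connected) (k : ℕ) (hk : 0 < k) (hkn : k < Fintype.card V)
    (f : Fin k → V) (hf : IsNashEq G f) (i : Fin k) :
    (cellRadius G f i : ℚ) ≤ (Fintype.card V : ℚ) / k + 1 :=
  stmt14_general G k f hf i
end
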